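/- Let X_1, …, X_n be independent mean-zero random variables on a probability space with partial sums S_k = Σ_{i=1}^k X_i and B_n² = Σ_{i=1}^n E[X_i²]. Then for all x, y > 0: P(max_{k ≤ n} S_k ≥ x) ≤ P(max_{k ≤ n} X_k > y) + exp( − x² / (2(xy + B_{n,y}²)) · (1 + (2/3)·ln(1 + xy/B_{n,y}²)) ), where B_{n,y}² = Σ_{i=1}^n E[(min(X_i, y))²]. -/

import Mathlib

/-!
Truncate at `y`: off the event `max_k X_k > y` the partial sums of the `X_i` are those of
`Z_i = min (X_i, y)`, which are bounded above by `y`, have nonpositive mean, and whose second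
moments sum to `B = B_{n,y}^2`. For `t > 0` the normalised products
`∏_{i<k} exp (t Z_i) / E exp (t Z_i)` form a nonnegative martingale, so by Doob's maximal
inequality some partial sum of the `Z_i` reaches `x` with probability at most
`exp (-t x) ∏_{i<n} E exp (t Z_i)`. Bennett's bound `exp s ≤ 1 + s + (e^c - 1 - c) / c^2 * s^2`
for `s ≤ c` gives `E exp (t Z_i) ≤ exp (φ E Z_i^2)` with `φ = (e^{ty} - 1 - ty) / y^2`. The choice
`t = log (1 + s) / y`, `s = xy / B`, turns `-tx + φ B` into `-(B / y^2) ((1 + s) log (1 + s) - s)`,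
and the Padé bound `log (1 + s) ≥ (6s + 3s^2) / (6 + 6s + s^2)` shows
`(1 + s) log (1 + s) - s ≥ s^2 / (2 (1 + s)) * (1 + 2/3 log (1 + s))`.
-/

open MeasureTheory ProbabilityTheory Finset Real

namespace Real

theorem exp_sub_one_sub_eq_sq_mul_integral (s : ℝ) :
    exp s - 1 - s = s ^ 2 * ∫ τ in (0 : ℝ)..1, (1 - τ) * exp (s * τ) := by
  rcases eq_or_ne s 0 with rfl | hs
  · simp
  have hderiv : ∀ τ ∈ Set.uIcc (0 : ℝ) 1, HasDerivAt
      (fun τ ↦ ((1 - τ) / s + 1 / s ^ 2) * exp (s * τ)) ((1 - τ) * exp (s * τ)) τ := by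
    intro τ _
    have hlin : HasDerivAt (fun τ ↦ (1 - τ) / s + 1 / s ^ 2) (-1 / s) τ := by
      simpa using ((hasDerivAt_id τ).const_sub 1).div_const s |>.add_const (1 / s ^ 2)
    have hexp : HasDerivAt (fun τ ↦ exp (s * τ)) (exp (s * τ) * s) τ := by
      simpa using ((hasDerivAt_id τ).const_mul s).exp
    exact (hlin.mul hexp).congr_deriv (by field_simp; ring)
  rw [intervalIntegral.integral_eq_sub_of_hasDerivAt hderiv
    ((by fun_prop : Continuous _).intervalIntegrable _ _)]
  simp only [sub_self, zero_div, zero_add, mul_one, mul_zero, sub_zero, exp_zero]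
  field_simp
  ring

theorem exp_le_one_add_add_mul_sq {c s : ℝ} (hc : 0 < c) (hs : s ≤ c) :
    exp s ≤ 1 + s + (exp c - 1 - c) / c ^ 2 * s ^ 2 := by
  have hmono : (∫ τ in (0 : ℝ)..1, (1 - τ) * exp (s * τ))
      ≤ ∫ τ in (0 : ℝ)..1, (1 - τ) * exp (c * τ) := by
    refine intervalIntegral.integral_mono_on zero_le_one
      ((by fun_prop : Continuous _).intervalIntegrable _ _)
      ((by fun_prop : Continuous _).intervalIntegrable _ _) ?_
    intro τ ⟨hτ0, hτ1⟩
    gcongr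
  rw [exp_sub_one_sub_eq_sq_mul_integral c, mul_div_cancel_left₀ _ (by positivity)]
  nlinarith [exp_sub_one_sub_eq_sq_mul_integral s, mul_le_mul_of_nonneg_left hmono (sq_nonneg s)]

theorem pade_le_log_one_add {t : ℝ} (ht : 0 ≤ t) :
    (6 * t + 3 * t ^ 2) / (6 + 6 * t + t ^ 2) ≤ log (1 + t) := by
  set g : ℝ → ℝ := fun u ↦ log (1 + u) - (6 * u + 3 * u ^ 2) / (6 + 6 * u + u ^ 2)
  have hden (u : ℝ) (hu : 0 ≤ u) : 0 < 6 + 6 * u + u ^ 2 := by positivity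
  have hderiv : ∀ u, 0 ≤ u → HasDerivAt g
      ((1 + u)⁻¹ - (36 + 36 * u + 12 * u ^ 2) / (6 + 6 * u + u ^ 2) ^ 2) u := by
    intro u hu
    have hlog : HasDerivAt (fun v ↦ log (1 + v)) (1 + u)⁻¹ u := by
      simpa using ((hasDerivAt_id u).const_add 1).log (by positivity)
    have hnum : HasDerivAt (fun v : ℝ ↦ 6 * v + 3 * v ^ 2) (6 + 6 * u) u :=
      (((hasDerivAt_id' u).const_mul 6).fun_add
        ((hasDerivAt_pow 2 u).const_mul 3)).congr_deriv (by ring)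
    have hdenom : HasDerivAt (fun v : ℝ ↦ 6 + 6 * v + v ^ 2) (6 + 2 * u) u :=
      ((((hasDerivAt_id' u).const_mul 6).const_add 6).fun_add
        (hasDerivAt_pow 2 u)).congr_deriv (by ring)
    exact (hlog.sub (hnum.div hdenom (hden u hu).ne')).congr_deriv (by ring)
  have hmono : MonotoneOn g (Set.Ici 0) := by
    refine monotoneOn_of_deriv_nonneg (convex_Ici 0) ?_ ?_ ?_
    · exact fun u hu ↦ (hderiv u hu).continuousAt.continuousWithinAt
    · rw [interior_Ici]
      exact fun u hu ↦ (hderiv u (le_of_lt hu)).differentiableAt.differentiableWithinAt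
    · rw [interior_Ici]
      intro u (hu : 0 < u)
      -- the derivative equals `u ^ 4 / ((1 + u) * (6 + 6 * u + u ^ 2) ^ 2)`
      rw [(hderiv u hu.le).deriv, sub_nonneg, inv_eq_one_div,
        div_le_div_iff₀ (pow_pos (hden u hu.le) 2) (by positivity)]
      nlinarith [pow_pos hu 4]
  have := hmono (Set.mem_Ici.2 le_rfl) (Set.mem_Ici.2 ht) ht
  simpa [g, sub_nonneg] using this

theorem sq_div_mul_one_add_log_le {t : ℝ} (ht : 0 ≤ t) :
    t ^ 2 / (2 * (1 + t)) * (1 + 2 / 3 * log (1 + t)) ≤ (1 + t) * log (1 + t) - t := by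
  have hpade := pade_le_log_one_add ht
  rw [div_le_iff₀ (by positivity)] at hpade
  rw [div_mul_eq_mul_div, div_le_iff₀ (by positivity)]
  -- this needs `log (1 + t) ≥ (2t + 3t^2) / (2 + 4t + 4t^2/3)`, which the Padé bound exceeds by
  -- `t^4 / ((6 + 6t + t^2) (2 + 4t + 4t^2/3))`
  nlinarith [pow_nonneg ht 4, mul_nonneg (pow_nonneg ht 2) (log_nonneg (by linarith : 1 ≤ 1 + t))]

end Real

namespace ProbabilityTheory

variable {Ω : Type*} [MeasurableSpace Ω] {μ : Measure Ω} {W : ℕ → Ω → ℝ}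

theorem iIndepFun.indepFun_of_stronglyMeasurable_natural (hW : ∀ i, Measurable (W i))
    (hindep : iIndepFun W μ) {i j : ℕ} (hij : i < j) {g : Ω → ℝ}
    (hg : StronglyMeasurable[(Filtration.natural W fun k ↦ (hW k).stronglyMeasurable) i] g) :
    IndepFun g (W j) μ :=
  (IndepFun_iff_Indep _ _ _).2 <| indep_of_indep_of_le_left
    (hindep.indep_comap_natural_of_lt _ hij).symm hg.measurable.comap_le

theorem martingale_prod_range_succ (hW : ∀ i, Measurable (W i)) (hindep : iIndepFun W μ)
    (hint : ∀ i, Integrable (W i) μ) (hmean : ∀ i, μ[W i] = 1) :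
    Martingale (fun k ω ↦ ∏ i ∈ range (k + 1), W i ω)
      (Filtration.natural W fun i ↦ (hW i).stronglyMeasurable) μ := by
  have := hindep.isProbabilityMeasure
  set ℱ := Filtration.natural W fun i ↦ (hW i).stronglyMeasurable
  have hadapted : StronglyAdapted ℱ fun k ω ↦ ∏ i ∈ range (k + 1), W i ω := fun k ↦
    Finset.stronglyMeasurable_fun_prod _ fun i hi ↦
      (Filtration.stronglyAdapted_natural _ i).mono (ℱ.mono (Nat.lt_succ_iff.1 (mem_range.1 hi)))
  have hindep_succ (k : ℕ) : IndepFun (fun ω ↦ ∏ i ∈ range (k + 1), W i ω) (W (k + 1)) μ :=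
    hindep.indepFun_of_stronglyMeasurable_natural hW k.lt_succ_self (hadapted k)
  have hprod_succ (k : ℕ) : (fun ω ↦ ∏ i ∈ range (k + 1 + 1), W i ω)
      = (fun ω ↦ ∏ i ∈ range (k + 1), W i ω) * W (k + 1) := by
    ext ω; simp [prod_range_succ _ (k + 1)]
  have hint_prod (k : ℕ) : Integrable (fun ω ↦ ∏ i ∈ range (k + 1), W i ω) μ := by
    induction k with
    | zero => simpa using hint 0
    | succ k ih => rw [hprod_succ]; exact (hindep_succ k).integrable_mul ih (hint _)
  refine martingale_of_setIntegral_eq_succ hadapted hint_prod fun k s hs ↦ ?_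
  have hs' : MeasurableSet s := ℱ.le k s hs
  have hindep_ind : IndepFun (s.indicator fun ω ↦ ∏ i ∈ range (k + 1), W i ω) (W (k + 1)) μ :=
    hindep.indepFun_of_stronglyMeasurable_natural hW k.lt_succ_self
      ((hadapted k).indicator hs)
  rw [← integral_indicator hs', ← integral_indicator hs', hprod_succ]
  simp only [Pi.mul_def, Set.indicator_mul_left]
  rw [hindep_ind.integral_fun_mul_eq_mul_integral ((hint_prod k).indicator hs').aestronglyMeasurable
      (hint _).aestronglyMeasurable, hmean, mul_one]

theorem measureReal_exists_le_prod_le (hW : ∀ i, Measurable (W i)) (hindep : iIndepFun W μ)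
    (hnonneg : ∀ i ω, 0 ≤ W i ω) (hint : ∀ i, Integrable (W i) μ) (hmean : ∀ i, μ[W i] = 1)
    {a : ℝ} (ha : 0 < a) (n : ℕ) :
    μ.real {ω | ∃ k ∈ Icc 1 n, a ≤ ∏ i ∈ range k, W i ω} ≤ a⁻¹ := by
  have := hindep.isProbabilityMeasure
  rcases n with _ | m
  · simp [ha.le]
  set f : ℕ → Ω → ℝ := fun k ω ↦ ∏ i ∈ range (k + 1), W i ω
  have hM : Martingale f _ μ := martingale_prod_range_succ hW hindep hint hmean
  have hf_nonneg : 0 ≤ f := fun k ω ↦ prod_nonneg fun i _ ↦ hnonneg i ω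
  set E := {ω | a ≤ (range (m + 1)).sup' nonempty_range_add_one fun k ↦ f k ω}
  have hsub : {ω | ∃ k ∈ Icc 1 (m + 1), a ≤ ∏ i ∈ range k, W i ω} ⊆ E := by
    rintro ω ⟨k, hk, hak⟩
    obtain ⟨hk1, hkm⟩ := mem_Icc.1 hk
    obtain ⟨j, rfl⟩ := Nat.exists_eq_add_of_le' hk1
    exact le_sup'_of_le (fun k ↦ f k ω) (mem_range.2 (by omega)) hak
  have hmass : ∫ ω, f m ω ∂μ = 1 := by
    rw [← setIntegral_univ, ← hM.setIntegral_eq m.zero_le MeasurableSet.univ, setIntegral_univ]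
    simpa [f] using hmean 0
  have hdoob : a * μ.real E ≤ ∫ ω in E, f m ω ∂μ := by
    have := ENNReal.toReal_mono ENNReal.ofReal_ne_top
      (maximal_ineq hM.submartingale hf_nonneg (ε := a.toNNReal) m)
    rwa [ENNReal.toReal_mul, ENNReal.toReal_ofReal (integral_nonneg fun ω ↦ hf_nonneg m ω),
      ENNReal.coe_toReal, Real.coe_toNNReal a ha.le] at this
  calc μ.real {ω | ∃ k ∈ Icc 1 (m + 1), a ≤ ∏ i ∈ range k, W i ω} ≤ μ.real E :=
        measureReal_mono hsub
    _ ≤ a⁻¹ := by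
        rw [inv_eq_one_div, le_div_iff₀' ha, ← hmass]
        exact hdoob.trans (setIntegral_le_integral (hM.integrable m) (ae_of_all _ (hf_nonneg m)))

theorem mgf_le_exp_of_le [IsProbabilityMeasure μ] {Z : Ω → ℝ} {t c : ℝ} (ht : 0 < t)
    (hc : 0 < c) (hZc : ∀ ω, Z ω ≤ c) (hZ : MemLp Z 2 μ) (hmean : μ[Z] ≤ 0) :
    mgf Z μ t ≤ exp ((exp (t * c) - 1 - t * c) / c ^ 2 * ∫ ω, Z ω ^ 2 ∂μ) := by
  set φ := (exp (t * c) - 1 - t * c) / c ^ 2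
  have hZ_int : Integrable Z μ := hZ.integrable one_le_two
  have hlin_int : Integrable (fun ω ↦ 1 + t * Z ω) μ :=
    (integrable_const 1).add (hZ_int.const_mul t)
  have hsq_int : Integrable (fun ω ↦ φ * Z ω ^ 2) μ := hZ.integrable_sq.const_mul φ
  have hpointwise (ω : Ω) : exp (t * Z ω) ≤ 1 + t * Z ω + φ * Z ω ^ 2 := by
    convert exp_le_one_add_add_mul_sq (mul_pos ht hc)
      (mul_le_mul_of_nonneg_left (hZc ω) ht.le) using 2
    simp only [φ]
    field_simp
  calc mgf Z μ t ≤ ∫ ω, (1 + t * Z ω + φ * Z ω ^ 2) ∂μ :=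
        integral_mono (integrable_exp_mul_of_le t c ht.le hZ.aemeasurable (ae_of_all _ hZc))
          (hlin_int.add hsq_int) hpointwise
    _ = 1 + t * μ[Z] + φ * ∫ ω, Z ω ^ 2 ∂μ := by
        rw [integral_add hlin_int hsq_int, integral_add (integrable_const 1) (hZ_int.const_mul t),
          integral_const_mul, integral_const_mul, integral_const, probReal_univ, one_smul]
    _ ≤ 1 + φ * ∫ ω, Z ω ^ 2 ∂μ := by nlinarith
    _ ≤ exp (φ * ∫ ω, Z ω ^ 2 ∂μ) := by linarith [add_one_le_exp (φ * ∫ ω, Z ω ^ 2 ∂μ)]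

theorem measureReal_exists_le_exp_sum_div_prod_mgf_le {Z : ℕ → Ω → ℝ}
    (hZ : ∀ i, Measurable (Z i)) (hindep : iIndepFun Z μ) {t : ℝ}
    (hint : ∀ i, Integrable (fun ω ↦ exp (t * Z i ω)) μ) {a : ℝ} (ha : 0 < a) (n : ℕ) :
    μ.real {ω | ∃ k ∈ Icc 1 n,
      a ≤ exp (t * ∑ i ∈ range k, Z i ω) / ∏ i ∈ range k, mgf (Z i) μ t} ≤ a⁻¹ := by
  have := hindep.isProbabilityMeasure
  have hmgf_pos (i : ℕ) : 0 < mgf (Z i) μ t := mgf_pos (hint i)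
  set W : ℕ → Ω → ℝ := fun i ω ↦ exp (t * Z i ω) / mgf (Z i) μ t
  have hW_mean (i : ℕ) : μ[W i] = 1 := by
    simp only [W, integral_div]
    exact div_self (hmgf_pos i).ne'
  convert measureReal_exists_le_prod_le (W := W) (fun i ↦ by fun_prop)
    (hindep.comp (fun i v ↦ exp (t * v) / mgf (Z i) μ t) fun i ↦ by fun_prop)
    (fun i ω ↦ div_nonneg (exp_pos _).le (hmgf_pos i).le) (fun i ↦ (hint i).div_const _)
    hW_mean ha n using 6
  simp only [W, prod_div_distrib, ← exp_sum, mul_sum]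

theorem mgf_min_le_exp [IsProbabilityMeasure μ] {X : Ω → ℝ} (hX : MemLp X 2 μ) (hmean : μ[X] = 0)
    {t y : ℝ} (ht : 0 < t) (hy : 0 < y) :
    mgf (fun ω ↦ min (X ω) y) μ t ≤
      exp ((exp (t * y) - 1 - t * y) / y ^ 2 * ∫ ω, min (X ω) y ^ 2 ∂μ) := by
  refine mgf_le_exp_of_le ht hy (fun ω ↦ min_le_right _ _) (hX.inf (memLp_const y)) ?_
  rw [← hmean]
  exact integral_mono ((hX.integrable one_le_two).inf (integrable_const y))
    (hX.integrable one_le_two) fun ω ↦ min_le_left _ _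

theorem prod_mgf_min_le_exp [IsProbabilityMeasure μ] {n k : ℕ} (hk : k ≤ n) {X : ℕ → Ω → ℝ}
    (hmean : ∀ i < n, μ[X i] = 0) (hL2 : ∀ i < n, MemLp (X i) 2 μ) {t y : ℝ} (ht : 0 < t)
    (hy : 0 < y) :
    ∏ i ∈ range k, mgf (fun ω ↦ min (X i ω) y) μ t ≤
      exp ((exp (t * y) - 1 - t * y) / y ^ 2 * ∑ i ∈ range n, ∫ ω, min (X i ω) y ^ 2 ∂μ) := by
  set φ := (exp (t * y) - 1 - t * y) / y ^ 2
  have hφ : 0 ≤ φ := div_nonneg (by linarith [add_one_le_exp (t * y)]) (sq_nonneg y)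
  calc ∏ i ∈ range k, mgf (fun ω ↦ min (X i ω) y) μ t
      ≤ ∏ i ∈ range k, exp (φ * ∫ ω, min (X i ω) y ^ 2 ∂μ) :=
        prod_le_prod (fun i _ ↦ mgf_nonneg) fun i hi ↦
          have hin : i < n := (mem_range.1 hi).trans_le hk
          mgf_min_le_exp (hL2 i hin) (hmean i hin) ht hy
    _ = exp (φ * ∑ i ∈ range k, ∫ ω, min (X i ω) y ^ 2 ∂μ) := by rw [← exp_sum, mul_sum]
    _ ≤ exp (φ * ∑ i ∈ range n, ∫ ω, min (X i ω) y ^ 2 ∂μ) := by gcongr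

theorem measureReal_exists_le_sum_le_add_exp [IsProbabilityMeasure μ] {n : ℕ} {X : ℕ → Ω → ℝ}
    (hmeas : ∀ i, Measurable (X i)) (hindep : iIndepFun X μ) (hmean : ∀ i < n, μ[X i] = 0)
    (hL2 : ∀ i < n, MemLp (X i) 2 μ) {x y t : ℝ} (hy : 0 < y) (ht : 0 < t) :
    μ.real {ω | ∃ k ∈ Icc 1 n, x ≤ ∑ i ∈ range k, X i ω} ≤
      μ.real {ω | ∃ i ∈ range n, y < X i ω} + exp (-(t * x) +
        (exp (t * y) - 1 - t * y) / y ^ 2 * ∑ i ∈ range n, ∫ ω, min (X i ω) y ^ 2 ∂μ) := by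
  set φB := (exp (t * y) - 1 - t * y) / y ^ 2 * ∑ i ∈ range n, ∫ ω, min (X i ω) y ^ 2 ∂μ
  set Z : ℕ → Ω → ℝ := fun i ω ↦ min (X i ω) y
  have hexp_int (i : ℕ) : Integrable (fun ω ↦ exp (t * Z i ω)) μ :=
    integrable_exp_mul_of_le t y ht.le ((hmeas i).min measurable_const).aemeasurable
      (ae_of_all _ fun ω ↦ min_le_right _ _)
  have hsub : {ω | ∃ k ∈ Icc 1 n, x ≤ ∑ i ∈ range k, X i ω} ⊆
      {ω | ∃ i ∈ range n, y < X i ω} ∪ {ω | ∃ k ∈ Icc 1 n,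
        exp (t * x) / exp φB ≤ exp (t * ∑ i ∈ range k, Z i ω) / ∏ i ∈ range k, mgf (Z i) μ t} := by
    rintro ω ⟨k, hk, hxk⟩
    by_cases hbig : ∃ i ∈ range n, y < X i ω
    · exact Or.inl hbig
    push Not at hbig
    have hkn : k ≤ n := (mem_Icc.1 hk).2
    have hsum : ∑ i ∈ range k, Z i ω = ∑ i ∈ range k, X i ω :=
      sum_congr rfl fun i hi ↦ min_eq_left (hbig i (range_subset_range.2 hkn hi))
    refine Or.inr ⟨k, hk, ?_⟩
    rw [hsum]
    gcongr
    exacts [prod_pos fun i _ ↦ mgf_pos (hexp_int i), prod_mgf_min_le_exp hkn hmean hL2 ht hy]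
  calc μ.real {ω | ∃ k ∈ Icc 1 n, x ≤ ∑ i ∈ range k, X i ω}
      ≤ μ.real {ω | ∃ i ∈ range n, y < X i ω} + μ.real {ω | ∃ k ∈ Icc 1 n,
          exp (t * x) / exp φB ≤
            exp (t * ∑ i ∈ range k, Z i ω) / ∏ i ∈ range k, mgf (Z i) μ t} :=
        (measureReal_mono hsub).trans (measureReal_union_le _ _)
    _ ≤ μ.real {ω | ∃ i ∈ range n, y < X i ω} + (exp (t * x) / exp φB)⁻¹ := by
        gcongr
        exact measureReal_exists_le_exp_sum_div_prod_mgf_le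
          (fun i ↦ (hmeas i).min measurable_const)
          (hindep.comp (fun _ v ↦ min v y) fun _ ↦ by fun_prop) hexp_int
          (div_pos (exp_pos _) (exp_pos _)) n
    _ = _ := by rw [inv_div, ← exp_sub]; ring_nf

end ProbabilityTheory

theorem exponential_inequality_max_partial_sums
    {Ω : Type*} [MeasurableSpace Ω] (μ : Measure Ω) [IsProbabilityMeasure μ]
    (n : ℕ) (X : ℕ → Ω → ℝ)
    (hmeas : ∀ i, Measurable (X i))
    (hindep : iIndepFun X μ)
    (hmean : ∀ i, i < n → ∫ ω, X i ω ∂μ = 0)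
    (hsq : ∀ i, i < n → Integrable (fun ω => X i ω ^ 2) μ)
    (x y : ℝ) (hx : 0 < x) (hy : 0 < y) :
    (μ {ω | ∃ k ∈ Finset.Icc 1 n, x ≤ ∑ i ∈ Finset.range k, X i ω}).toReal ≤
      (μ {ω | ∃ i ∈ Finset.range n, y < X i ω}).toReal +
      Real.exp (-(x ^ 2) /
          (2 * (x * y + ∑ i ∈ Finset.range n, ∫ ω, (min (X i ω) y) ^ 2 ∂μ)) *
        (1 + 2 / 3 * Real.log
          (1 + x * y / ∑ i ∈ Finset.range n, ∫ ω, (min (X i ω) y) ^ 2 ∂μ))) := by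
  have hL2 (i : ℕ) (hi : i < n) : MemLp (X i) 2 μ :=
    (memLp_two_iff_integrable_sq (hmeas i).aestronglyMeasurable).2 (hsq i hi)
  have hB : 0 ≤ ∑ i ∈ range n, ∫ ω, min (X i ω) y ^ 2 ∂μ :=
    sum_nonneg fun i _ ↦ integral_nonneg fun ω ↦ sq_nonneg _
  rcases hB.eq_or_lt with hB0 | hBpos
  -- With `B = 0` the junk value `x * y / 0 = 0` leaves the target exponent `-x / (2 * y)`.
  · refine (measureReal_exists_le_sum_le_add_exp hmeas hindep hmean hL2 (x := x) hy
      (t := 1 / (2 * y)) (by positivity)).trans_eq (congrArg _ (congrArg exp ?_))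
    rw [← hB0, div_zero, add_zero, add_zero, log_one]
    field_simp
    ring
  set B := ∑ i ∈ range n, ∫ ω, min (X i ω) y ^ 2 ∂μ
  set s := x * y / B
  have hs : 0 < s := by positivity
  refine (measureReal_exists_le_sum_le_add_exp hmeas hindep hmean hL2 (x := x) hy
    (t := log (1 + s) / y) (by have := log_pos (by linarith : 1 < 1 + s); positivity)).trans
    (add_le_add le_rfl (exp_le_exp.2 ?_))
  have hx_eq : x = s * B / y := by simp only [s]; field_simp
  rw [div_mul_cancel₀ _ hy.ne', exp_log (by positivity)]
  calc _ = -(B / y ^ 2) * ((1 + s) * log (1 + s) - s) := by rw [hx_eq]; field_simp; ring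
    _ ≤ -(B / y ^ 2) * (s ^ 2 / (2 * (1 + s)) * (1 + 2 / 3 * log (1 + s))) :=
      mul_le_mul_of_nonpos_left (sq_div_mul_one_add_log_le hs.le)
        (neg_nonpos.2 (by positivity))
    _ = _ := by rw [hx_eq]; field_simp; ring
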